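/- arXiv:1908.06611 — 2 statements merged into one kernel-verified Lean document; each statement's English description precedes it below -/
import Mathlib

section
/- For every n ≥ 1 and every integer k ≥ 0, P(l(n) > k) ≤ n (1−γ)^k. -/
open MeasureTheory ProbabilityTheory Filter
open scoped ENNReal

noncomputable section

/-- The random walk `S_n = X_1 + ... + X_n` in `ℤ^d`, with `S_0 = 0`. -/
def walk (d : ℕ) {Ω : Type*} (X : ℕ → Ω → (Fin d → ℤ)) (n : ℕ) (ω : Ω) : Fin d → ℤ :=
  ∑ i ∈ Finset.range n, X i ω

/-- The local time `l(n,x) = Σ_{i=0}^n 1{S_i = x}` of the site `x` up to time `n`. -/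
def localTime (d : ℕ) {Ω : Type*} (X : ℕ → Ω → (Fin d → ℤ)) (n : ℕ) (x : Fin d → ℤ)
    (ω : Ω) : ℕ :=
  ∑ i ∈ Finset.range (n + 1), if walk d X i ω = x then 1 else 0

/-- `γ = P(S_n ≠ 0 for all n ≥ 1)`, the probability of no return to the origin. -/
def noReturnProb (d : ℕ) {Ω : Type*} [MeasurableSpace Ω] (μ : Measure Ω)
    (X : ℕ → Ω → (Fin d → ℤ)) : ℝ :=
  (μ {ω | ∀ n : ℕ, 1 ≤ n → walk d X n ω ≠ 0}).toReal

/-- The maximal local time `l(n) = max{l(n,x) : x ∈ ℤ^d}`; the maximum over all of `ℤ^d`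
is attained at a visited site `S_i`, `0 ≤ i ≤ n` (elsewhere the local time is `0`). -/
def maxLocalTime (d : ℕ) {Ω : Type*} (X : ℕ → Ω → (Fin d → ℤ)) (n : ℕ) (ω : Ω) : ℕ :=
  (Finset.range (n + 1)).sup fun i => localTime d X n (walk d X i ω) ω

/-! If `l(n) > k`, some site is first visited at a time `t < n` and then revisited at least `k`
times, so by a union bound over `t` it suffices that the walk restarted at any time returns to its
starting point at least `k` times with probability `(1 - γ)^k`. The law of the increment sequence
is an i.i.d. product measure; splitting a path at its first return, the part before depends only
on the increments before it while the part after is an independent copy of the whole walk, so each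
further return costs exactly a factor `1 - γ`. -/

lemma ProbabilityTheory.iIndepFun.indepFun_Iio_shift {Ω β : Type*} [MeasurableSpace Ω]
    {μ : Measure Ω} [MeasurableSpace β] {X : ℕ → Ω → β} (hX : ∀ i, Measurable (X i))
    (h : iIndepFun X μ) (s : ℕ) :
    IndepFun (fun ω (i : Set.Iio s) => X i ω) (fun ω i => X (s + i) ω) μ := by
  have hblocks := indep_iSup_of_disjoint (fun i => (hX i).comap_le) h.iIndep
    (S := Set.Iio s) (T := Set.Ici s) (Set.Iio_disjoint_Ici le_rfl)
  rw [IndepFun_iff_Indep]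
  refine indep_of_indep_of_le hblocks ?_ ?_ <;>
    simp only [MeasurableSpace.pi, MeasurableSpace.comap_iSup, MeasurableSpace.comap_comp] <;>
    refine iSup_le fun i => ?_
  · exact le_iSup₂ (f := fun j (_ : j ∈ Set.Iio s) => MeasurableSpace.comap (X j) _) i.1 i.2
  · exact le_iSup₂ (f := fun j (_ : j ∈ Set.Ici s) => MeasurableSpace.comap (X j) _) (s + i)
      (Nat.le_add_right s i)

open Finset

namespace RandomWalk

section Increments

variable {G : Type*} [AddCommGroup G]

def partialSum (m : ℕ) (y : ℕ → G) : G := ∑ i ∈ range m, y i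

def shift {β : Type*} (s : ℕ) (y : ℕ → β) : ℕ → β := fun i => y (s + i)

def firstReturnAt (s : ℕ) : Set (ℕ → G) :=
  {y | 1 ≤ s ∧ partialSum s y = 0 ∧ ∀ m ∈ Ico 1 s, partialSum m y ≠ 0}

def returnsAtLeast : ℕ → Set (ℕ → G)
  | 0 => Set.univ
  | k + 1 => ⋃ s, firstReturnAt s ∩ shift s ⁻¹' returnsAtLeast k

@[simp]
lemma shift_zero {β : Type*} (y : ℕ → β) : shift 0 y = y := by
  funext i; simp only [shift, zero_add]

lemma shift_shift {β : Type*} (a b : ℕ) (y : ℕ → β) :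
    shift b (shift a y) = shift (a + b) y := by
  funext i; simp only [shift, add_assoc]

lemma partialSum_add (a m : ℕ) (y : ℕ → G) :
    partialSum (a + m) y = partialSum a y + partialSum m (shift a y) :=
  sum_range_add _ _ _

lemma partialSum_shift_eq_zero_iff {a m : ℕ} {y : ℕ → G} :
    partialSum m (shift a y) = 0 ↔ partialSum (a + m) y = partialSum a y := by
  rw [partialSum_add, add_eq_left]

lemma partialSum_congr {m : ℕ} {y z : ℕ → G} (h : ∀ i < m, y i = z i) :
    partialSum m y = partialSum m z :=
  sum_congr rfl fun i hi => h i (mem_range.mp hi)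

lemma pairwise_disjoint_firstReturnAt :
    Pairwise (Function.onFun Disjoint (firstReturnAt (G := G))) := by
  suffices ∀ a b, a < b → Disjoint (firstReturnAt (G := G) a) (firstReturnAt b) from
    fun a b hab => hab.lt_or_gt.elim (this a b) fun h => (this b a h).symm
  intro a b hab
  rw [Set.disjoint_left]
  rintro y ⟨ha, hya, -⟩ ⟨-, -, hyb⟩
  exact hyb a (mem_Ico.mpr ⟨ha, hab⟩) hya

lemma mem_firstReturnAt_of_forall_lt_eq {s : ℕ} {y z : ℕ → G} (h : ∀ i < s, y i = z i)
    (hy : y ∈ firstReturnAt s) : z ∈ firstReturnAt s := by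
  obtain ⟨hs, hys, hmin⟩ := hy
  refine ⟨hs, partialSum_congr h ▸ hys, fun m hm => ?_⟩
  rw [← partialSum_congr fun i hi => h i (hi.trans (mem_Ico.mp hm).2)]
  exact hmin m hm

lemma dependsOn_mem_firstReturnAt (s : ℕ) :
    DependsOn (· ∈ firstReturnAt (G := G) s) (Set.Iio s) := fun _ _ h =>
  propext ⟨mem_firstReturnAt_of_forall_lt_eq h,
    mem_firstReturnAt_of_forall_lt_eq fun i hi => (h i hi).symm⟩

lemma shift_mem_returnsAtLeast (k : ℕ) {y : ℕ → G} {a : ℕ} {T : Finset ℕ}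
    (hT : ∀ m ∈ T, a < m ∧ partialSum m y = partialSum a y) (hk : k ≤ #T) :
    shift a y ∈ returnsAtLeast k := by
  classical
  induction k generalizing a T with
  | zero => trivial
  | succ k ih =>
    obtain ⟨m, hm⟩ := card_pos.mp (by omega : 0 < #T)
    have hP : ∃ j, 1 ≤ j ∧ partialSum j (shift a y) = 0 := by
      refine ⟨m - a, by have := (hT m hm).1; omega, ?_⟩
      rw [partialSum_shift_eq_zero_iff, Nat.add_sub_cancel' (hT m hm).1.le, (hT m hm).2]
    set s := Nat.find hP
    have hs : partialSum (a + s) y = partialSum a y :=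
      partialSum_shift_eq_zero_iff.mp (Nat.find_spec hP).2
    have hfirst : shift a y ∈ firstReturnAt s :=
      ⟨(Nat.find_spec hP).1, (Nat.find_spec hP).2, fun j hj h0 =>
        Nat.find_min hP (mem_Ico.mp hj).2 ⟨(mem_Ico.mp hj).1, h0⟩⟩
    -- `a + s` need not lie in `T`, but every point of `T` is at or after it.
    have htail : shift (a + s) y ∈ returnsAtLeast k := by
      refine ih (T := T.erase (a + s)) (fun j hj => ?_) ?_
      · obtain ⟨hja, hjy⟩ := hT j (mem_of_mem_erase hj)
        have hsj : s ≤ j - a := Nat.find_min' hP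
          ⟨by omega, by rw [partialSum_shift_eq_zero_iff, Nat.add_sub_cancel' hja.le, hjy]⟩
        exact ⟨by have := ne_of_mem_erase hj; omega, hjy.trans hs.symm⟩
      · have := pred_card_le_card_erase (s := T) (a := a + s)
        omega
    exact Set.mem_iUnion.mpr ⟨s, hfirst, by rwa [Set.mem_preimage, shift_shift]⟩

lemma mem_returnsAtLeast_one_iff {y : ℕ → G} :
    y ∈ returnsAtLeast 1 ↔ ∃ m, 1 ≤ m ∧ partialSum m y = 0 := by
  constructor
  · rintro hy
    obtain ⟨s, ⟨hs, hys, -⟩, -⟩ := Set.mem_iUnion.mp hy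
    exact ⟨s, hs, hys⟩
  · rintro ⟨m, hm, hym⟩
    simpa using shift_mem_returnsAtLeast 1 (a := 0) (T := {m}) (y := y)
      (by simpa [partialSum] using ⟨by omega, hym⟩) (by simp)

end Increments

lemma preimage_domRestrict_image_of_dependsOn {ι : Type*} {β : ι → Type*} {S : Set ι}
    {A : Set (∀ i, β i)} (hA : DependsOn (· ∈ A) S) :
    S.domRestrict ⁻¹' (S.domRestrict '' A) = A := by
  refine subset_antisymm ?_ (Set.subset_preimage_image _ _)
  rintro y ⟨z, hz, hzy⟩
  exact (show (z ∈ A) = (y ∈ A) from hA fun i hi => congrFun hzy ⟨i, hi⟩) ▸ hz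

section Product

variable {β : Type*} [MeasurableSpace β] (P : Measure β) [IsProbabilityMeasure P]

lemma measurable_shift (s : ℕ) : Measurable (shift (β := β) s) :=
  measurable_pi_lambda _ fun _ => measurable_pi_apply _

lemma map_shift_infinitePi (s : ℕ) :
    (Measure.infinitePi fun _ : ℕ => P).map (shift s) = Measure.infinitePi fun _ => P :=
  Measure.map_infinitePi_infinitePi_of_inj (add_right_injective s)

variable [Countable β] [MeasurableSingletonClass β]

lemma measurableSet_of_dependsOn_Iio {s : ℕ} {A : Set (ℕ → β)}
    (hA : DependsOn (· ∈ A) (Set.Iio s)) : MeasurableSet A :=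
  preimage_domRestrict_image_of_dependsOn hA ▸
    (measurable_pi_lambda _ fun _ => measurable_pi_apply _) .of_discrete

lemma infinitePi_inter_shift_preimage {s : ℕ} {A B : Set (ℕ → β)}
    (hA : DependsOn (· ∈ A) (Set.Iio s)) (hB : MeasurableSet B) :
    Measure.infinitePi (fun _ => P) (A ∩ shift s ⁻¹' B) =
      Measure.infinitePi (fun _ => P) A * Measure.infinitePi (fun _ => P) B := by
  have hind : IndepFun (Set.Iio s).domRestrict (shift s) (Measure.infinitePi fun _ : ℕ => P) :=
    (iIndepFun_infinitePi (X := fun _ => id) fun _ => measurable_id).indepFun_Iio_shift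
      (fun i => measurable_pi_apply i) s
  rw [← preimage_domRestrict_image_of_dependsOn hA,
    hind.measure_inter_preimage_eq_mul _ _ .of_discrete hB,
    ← Measure.map_apply (measurable_shift s) hB, map_shift_infinitePi]

end Product

section ProductIncrements

variable {G : Type*} [AddCommGroup G] [MeasurableSpace G] [Countable G]
  [MeasurableSingletonClass G] (P : Measure G) [IsProbabilityMeasure P]

lemma measurableSet_returnsAtLeast (k : ℕ) : MeasurableSet (returnsAtLeast (G := G) k) := by
  induction k with
  | zero => exact .univ
  | succ k ih =>
    exact .iUnion fun s =>
      (measurableSet_of_dependsOn_Iio (dependsOn_mem_firstReturnAt s)).inter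
        (measurable_shift s ih)

/-- Splitting at the first return: the strong Markov property of the walk. -/
lemma infinitePi_returnsAtLeast_succ (k : ℕ) :
    Measure.infinitePi (fun _ => P) (returnsAtLeast (k + 1)) =
      Measure.infinitePi (fun _ => P) (⋃ s, firstReturnAt s) *
        Measure.infinitePi (fun _ => P) (returnsAtLeast k) := by
  have hfirst s := measurableSet_of_dependsOn_Iio (dependsOn_mem_firstReturnAt (G := G) s)
  rw [returnsAtLeast.eq_2, measure_iUnion, measure_iUnion pairwise_disjoint_firstReturnAt hfirst,
    ← ENNReal.tsum_mul_right]
  · exact tsum_congr fun s => infinitePi_inter_shift_preimage P (dependsOn_mem_firstReturnAt s)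
      (measurableSet_returnsAtLeast k)
  · exact fun a b hab => (pairwise_disjoint_firstReturnAt hab).mono
      Set.inter_subset_left Set.inter_subset_left
  · exact fun s => (hfirst s).inter (measurable_shift s (measurableSet_returnsAtLeast k))

lemma infinitePi_returnsAtLeast (k : ℕ) :
    Measure.infinitePi (fun _ => P) (returnsAtLeast (G := G) k) =
      Measure.infinitePi (fun _ => P) (returnsAtLeast 1) ^ k := by
  have h1 := infinitePi_returnsAtLeast_succ P (G := G) 0
  rw [zero_add, returnsAtLeast.eq_1, measure_univ, mul_one] at h1
  induction k with
  | zero => simp [returnsAtLeast]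
  | succ k ih => rw [infinitePi_returnsAtLeast_succ, ih, h1, pow_succ, mul_comm]

end ProductIncrements

lemma map_increments_eq_infinitePi {Ω β : Type*} [MeasurableSpace Ω] {μ : Measure Ω}
    [MeasurableSpace β] {X : ℕ → Ω → β} (hX : ∀ i, Measurable (X i))
    (hindep : iIndepFun X μ) (hident : ∀ i, μ.map (X i) = μ.map (X 0)) :
    μ.map (fun ω i => X i ω) = Measure.infinitePi fun _ => μ.map (X 0) := by
  rw [hindep.map_fun_eq_infinitePi_map hX]
  simp_rw [hident]

section Walk

variable {d : ℕ} {Ω : Type*} {X : ℕ → Ω → (Fin d → ℤ)}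

lemma walk_eq_partialSum (m : ℕ) (ω : Ω) : walk d X m ω = partialSum m (fun i => X i ω) := rfl

lemma exists_shift_mem_returnsAtLeast_of_lt_maxLocalTime {n k : ℕ} {ω : Ω} (hn : 1 ≤ n)
    (h : k < maxLocalTime d X n ω) :
    ∃ t < n, shift t (fun i => X i ω) ∈ returnsAtLeast k := by
  classical
  rcases k.eq_zero_or_pos with rfl | hk
  · exact ⟨0, hn, trivial⟩
  obtain ⟨i, -, hi⟩ := Finset.lt_sup_iff.mp h
  set T := (range (n + 1)).filter fun j => walk d X j ω = walk d X i ω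
  have hT : localTime d X n (walk d X i ω) ω = #T := by
    rw [localTime, sum_boole, Nat.cast_id]
  have hne : T.Nonempty := card_pos.mp (by omega)
  -- the first visit to a site visited more than `k` times
  set t := T.min' hne
  have ht : t ∈ T := T.min'_mem hne
  have hcard : k ≤ #(T.erase t) := by
    rw [card_erase_of_mem ht]
    omega
  have hlater : ∀ m ∈ T.erase t, t < m := fun m hm => T.min'_lt_of_mem_erase_min' hne hm
  refine ⟨t, ?_,
    shift_mem_returnsAtLeast k (T := T.erase t) (fun m hm => ⟨hlater m hm, ?_⟩) hcard⟩
  · obtain ⟨m, hm⟩ := card_pos.mp (by omega : 0 < #(T.erase t))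
    have hmn := mem_range.mp (mem_filter.mp (mem_of_mem_erase hm)).1
    have := hlater m hm
    omega
  · exact (mem_filter.mp (mem_of_mem_erase hm)).2.trans (mem_filter.mp ht).2.symm

variable [MeasurableSpace Ω] {μ : Measure Ω}

lemma measure_lt_maxLocalTime_le {P : Measure (Fin d → ℤ)} [IsProbabilityMeasure P]
    (hX : ∀ i, Measurable (X i))
    (hlaw : μ.map (fun ω i => X i ω) = Measure.infinitePi fun _ => P) {n : ℕ} (hn : 1 ≤ n)
    (k : ℕ) :
    μ {ω | k < maxLocalTime d X n ω} ≤
      n * Measure.infinitePi (fun _ => P) (returnsAtLeast k) := by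
  have hξ : Measurable fun ω i => X i ω := measurable_pi_lambda _ hX
  have hR := measurableSet_returnsAtLeast (G := Fin d → ℤ) k
  calc μ {ω | k < maxLocalTime d X n ω}
      ≤ μ (⋃ t ∈ range n, (fun ω i => X i ω) ⁻¹' (shift t ⁻¹' returnsAtLeast k)) :=
        measure_mono fun ω hω => by
          obtain ⟨t, ht, hmem⟩ := exists_shift_mem_returnsAtLeast_of_lt_maxLocalTime hn hω
          exact Set.mem_iUnion₂.mpr ⟨t, mem_range.mpr ht, hmem⟩
    _ ≤ ∑ t ∈ range n, μ ((fun ω i => X i ω) ⁻¹' (shift t ⁻¹' returnsAtLeast k)) :=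
        measure_biUnion_finset_le _ _
    _ = ∑ t ∈ range n, Measure.infinitePi (fun _ => P) (returnsAtLeast k) :=
        sum_congr rfl fun t _ => by
          rw [← Measure.map_apply hξ (measurable_shift t hR), hlaw,
            ← Measure.map_apply (measurable_shift t) hR, map_shift_infinitePi]
    _ = n * Measure.infinitePi (fun _ => P) (returnsAtLeast k) := by
      rw [sum_const, card_range, nsmul_eq_mul]

lemma noReturnProb_eq_one_sub [IsProbabilityMeasure μ] (hX : ∀ i, Measurable (X i)) :
    noReturnProb d μ X = 1 - (μ.map (fun ω i => X i ω) (returnsAtLeast 1)).toReal := by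
  have hξ : Measurable fun ω i => X i ω := measurable_pi_lambda _ hX
  have hR := measurableSet_returnsAtLeast (G := Fin d → ℤ) 1
  have hcompl : {ω | ∀ m, 1 ≤ m → walk d X m ω ≠ 0} =
      ((fun ω i => X i ω) ⁻¹' returnsAtLeast 1)ᶜ := by
    ext ω
    simp [mem_returnsAtLeast_one_iff, walk_eq_partialSum]
  rw [noReturnProb, hcompl, prob_compl_eq_one_sub (hξ hR),
    ENNReal.toReal_sub_of_le prob_le_one ENNReal.one_ne_top, Measure.map_apply hξ hR,
    ENNReal.toReal_one]

end Walk

end RandomWalk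

open RandomWalk

theorem stmt12_general
    {Ω : Type*} [MeasurableSpace Ω] (μ : Measure Ω) [IsProbabilityMeasure μ]
    (d : ℕ)
    (X : ℕ → Ω → (Fin d → ℤ))
    (hmeas : ∀ i, Measurable (X i))
    (hindep : iIndepFun X μ)
    (hident : ∀ i, μ.map (X i) = μ.map (X 0))
    (n : ℕ) (hn : 1 ≤ n) (k : ℕ) :
    (μ {ω | k < maxLocalTime d X n ω}).toReal ≤
      (n : ℝ) * (1 - noReturnProb d μ X) ^ k := by
  have := Measure.isProbabilityMeasure_map (μ := μ) (hmeas 0).aemeasurable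
  have hlaw := map_increments_eq_infinitePi hmeas hindep hident
  have hbound := measure_lt_maxLocalTime_le hmeas hlaw hn k
  rw [infinitePi_returnsAtLeast] at hbound
  rw [noReturnProb_eq_one_sub hmeas, hlaw, sub_sub_cancel]
  calc (μ {ω | k < maxLocalTime d X n ω}).toReal
      ≤ (n * Measure.infinitePi (fun _ => μ.map (X 0)) (returnsAtLeast 1) ^ k).toReal :=
        ENNReal.toReal_mono (by finiteness) hbound
    _ = _ := by rw [ENNReal.toReal_mul, ENNReal.toReal_pow, ENNReal.toReal_natCast]

/-- For `n ≥ 1` and any integer `k ≥ 0`: `P(l(n) > k) ≤ n (1-γ)^k`. -/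
theorem stmt12
    {Ω : Type*} [MeasurableSpace Ω] (μ : Measure Ω) [IsProbabilityMeasure μ]
    (d : ℕ) (hd : 1 ≤ d)
    (X : ℕ → Ω → (Fin d → ℤ))
    (hmeas : ∀ i, Measurable (X i))
    (hindep : iIndepFun X μ)
    (hident : ∀ i, μ.map (X i) = μ.map (X 0))
    (hγ0 : 0 < noReturnProb d μ X) (hγ1 : noReturnProb d μ X < 1)
    (n : ℕ) (hn : 1 ≤ n) (k : ℕ) :
    (μ {ω | k < maxLocalTime d X n ω}).toReal ≤
      (n : ℝ) * (1 - noReturnProb d μ X) ^ k :=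
  stmt12_general μ d X hmeas hindep hident n hn k

end
end

section
/- For all integers n ≥ 0 and j ≥ 1, E[Q_n(j)] = Σ_{0 ≤ k_1 < k_2 < ... < k_j ≤ n} γ_{k_1} · (Π_{i=1}^{j−1} P(τ = k_{i+1} − k_i)) · γ_{n−k_j}, where the (empty) product is 1 when j = 1. -/
/-!
A site visited exactly `j` times up to time `n` is `S_{k_1}` for exactly one tuple of times
`k_1 < ⋯ < k_j ≤ n`, namely the list of its visits; so `E[Q_n(j)]` is the sum over such tuples
of the probability that `k` lists all visits to `S_{k_1}` up to time `n`. That event says: the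
walk is not at `S_{k_1}` before `k_1`, it returns to `S_{k_i}` for the first time at `k_{i+1}`,
and it does not return after `k_j`. These conditions involve disjoint blocks of increments, so
they are independent, and since i.i.d. increments may be permuted without changing their joint
law, they have probabilities `γ_{k_1}` (reading the first block backwards), `P(τ = k_{i+1} - k_i)`
and `γ_{n - k_j}`.
-/

open MeasureTheory ProbabilityTheory Filter
open scoped ENNReal

noncomputable section

/-- `Q_n(j) = Σ_{x ∈ ℤ^d} 1{l(n,x) = j}`, the number of sites visited
exactly `j` times up to time `n` (for `j ≥ 1` only finitely many terms are nonzero). -/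
def Qfun (d : ℕ) {Ω : Type*} (X : ℕ → Ω → (Fin d → ℤ)) (n j : ℕ) (ω : Ω) : ℝ :=
  ∑' x : Fin d → ℤ, if localTime d X n x ω = j then (1 : ℝ) else 0

/-- `γ_m = P(τ ≥ m+1) = P(S_k ≠ 0 for all 1 ≤ k ≤ m)`, with `γ_0 = 1`. -/
def gamSeq (d : ℕ) {Ω : Type*} [MeasurableSpace Ω] (μ : Measure Ω)
    (X : ℕ → Ω → (Fin d → ℤ)) (m : ℕ) : ℝ :=
  (μ {ω | ∀ k : ℕ, 1 ≤ k → k ≤ m → walk d X k ω ≠ 0}).toReal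

/-- `P(τ = k)`, where `τ = inf{n ≥ 1 : S_n = 0}` is the first return time to the origin. -/
def tauEqProb (d : ℕ) {Ω : Type*} [MeasurableSpace Ω] (μ : Measure Ω)
    (X : ℕ → Ω → (Fin d → ℤ)) (k : ℕ) : ℝ :=
  (μ {ω | walk d X k ω = 0 ∧ ∀ i : ℕ, 1 ≤ i → i < k → walk d X i ω ≠ 0}).toReal

end

open Finset

section Path

variable {α : Type*} (S : ℕ → α)

def NoPriorVisit (c : ℕ) : Prop := ∀ u < c, S u ≠ S c

def NoReturn (a b : ℕ) : Prop := ∀ u, a < u → u ≤ b → S u ≠ S a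

def FirstReturn (a c : ℕ) : Prop := S c = S a ∧ ∀ u, a < u → u < c → S u ≠ S a

variable {S}

theorem visits_eq_range_iff {jj n : ℕ} {k : Fin (jj + 1) → ℕ} (hk : StrictMono k)
    (hkn : k (Fin.last jj) ≤ n) :
    (∀ m ≤ n, S m = S (k 0) ↔ m ∈ Set.range k) ↔
      NoPriorVisit S (k 0) ∧ (∀ l : Fin jj, FirstReturn S (k l.castSucc) (k l.succ)) ∧
        NoReturn S (k (Fin.last jj)) n := by
  have hkle : ∀ i, k i ≤ n := fun i => (hk.monotone (Fin.le_last i)).trans hkn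
  constructor
  · intro h
    have hvisit : ∀ i, S (k i) = S (k 0) := fun i => (h _ (hkle i)).2 ⟨i, rfl⟩
    have hrange : ∀ u ≤ n, S u = S (k 0) → ∃ i, k i = u := fun u hu => (h u hu).1
    refine ⟨fun u hu hSu => ?_,
      fun l => ⟨(hvisit _).trans (hvisit _).symm, fun u hlu hul hSu => ?_⟩,
      fun u hlu hun hSu => ?_⟩
    · obtain ⟨i, rfl⟩ := hrange u (hu.le.trans (hkle 0)) hSu
      exact hu.not_ge (hk.monotone (Fin.zero_le i))
    · obtain ⟨i, rfl⟩ := hrange u (hul.le.trans (hkle _)) (hSu.trans (hvisit _))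
      have hli := hk.lt_iff_lt.1 hlu
      have hil := hk.lt_iff_lt.1 hul
      simp only [Fin.lt_def, Fin.val_castSucc, Fin.val_succ] at hli hil
      omega
    · obtain ⟨i, rfl⟩ := hrange u hun (hSu.trans (hvisit _))
      exact (hk.lt_iff_lt.1 hlu).not_ge (Fin.le_last i)
  · rintro ⟨hprior, hreturn, htail⟩
    have hvisit : ∀ i, S (k i) = S (k 0) := by
      refine Fin.induction rfl fun l ih => ?_
      rw [(hreturn l).1, ih]
    refine fun m hm => ⟨fun hSm => ?_, fun ⟨i, hi⟩ => hi ▸ hvisit i⟩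
    by_contra hmk
    have hbelow : ∀ i, k i < m := by
      refine Fin.induction ?_ fun l ih => ?_
      · exact lt_of_le_of_ne (not_lt.1 fun h => hprior m h hSm) fun h => hmk ⟨0, h⟩
      · refine lt_of_le_of_ne (not_lt.1 fun h => (hreturn l).2 m ih h ?_) fun h => hmk ⟨_, h⟩
        exact hSm.trans (hvisit _).symm
    exact htail m (hbelow _) hm (hSm.trans (hvisit _).symm)

end Path

theorem card_filter_card_fiber_eq {ι α : Type*} [Fintype ι] [LinearOrder ι] [DecidableEq α]
    (f : ι → α) (jj : ℕ) :
    #{x ∈ univ.image f | #{i | f i = x} = jj + 1} =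
      #{k ∈ univ.filter (fun k : Fin (jj + 1) → ι => ∀ a b, a < b → k a < k b) |
        ∀ i, f i = f (k 0) ↔ ∃ l, k l = i} := by
  have fiber_of_visits : ∀ k : Fin (jj + 1) → ι, (∀ i, f i = f (k 0) ↔ ∃ l, k l = i) →
      ({i | f i = f (k 0)} : Finset ι) = univ.image k := by
    intro k hk
    ext i
    simp [hk]
  refine card_bij' (fun x hx => (univ.filter (f · = x)).orderEmbOfFin (mem_filter.1 hx).2)
    (fun k _ => f (k 0)) (fun x hx => ?_) (fun k hk => ?_) (fun x hx => ?_) (fun k hk => ?_)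
  · set e := (univ.filter (f · = x)).orderEmbOfFin (mem_filter.1 hx).2
    have he : ∀ l, f (e l) = x := fun l =>
      (mem_filter.1 (orderEmbOfFin_mem (univ.filter (f · = x)) (mem_filter.1 hx).2 l)).2
    have hrange : ∀ i, (∃ l, e l = i) ↔ f i = x := fun i => by
      rw [← Set.mem_range, range_orderEmbOfFin]
      simp
    simp only [mem_filter, mem_univ, true_and]
    exact ⟨fun a b hab => e.strictMono hab, fun i => by rw [he, hrange]⟩
  · simp only [mem_filter, mem_univ, true_and] at hk
    simp only [mem_filter, mem_image, mem_univ, true_and, fiber_of_visits k hk.2]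
    have hmono : StrictMono k := hk.1
    exact ⟨⟨k 0, rfl⟩, (card_image_of_injective _ hmono.injective).trans (by simp)⟩
  · exact (mem_filter.1 (orderEmbOfFin_mem (univ.filter (f · = x)) (mem_filter.1 hx).2 0)).2
  · simp only [mem_filter, mem_univ, true_and] at hk
    have hmono : StrictMono k := hk.1
    refine (orderEmbOfFin_unique _ (fun l => ?_) hmono).symm
    simp [hk.2]

section PathShift

variable {G : Type*} [AddGroup G] {S T : ℕ → G}

theorem noReturn_iff_of_shift {a : ℕ} (hT : ∀ t, T t = S (a + t) - S a) (b : ℕ) :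
    NoReturn S a b ↔ NoReturn T 0 (b - a) := by
  simp only [NoReturn, hT, add_zero, sub_self, ne_eq, sub_eq_zero]
  refine ⟨fun h u hu hub => h _ (by omega) (by omega), fun h u hau hub => ?_⟩
  simpa [Nat.add_sub_cancel' hau.le] using h (u - a) (by omega) (by omega)

theorem firstReturn_iff_of_shift {a c : ℕ} (hac : a ≤ c) (hT : ∀ t, T t = S (a + t) - S a) :
    FirstReturn S a c ↔ FirstReturn T 0 (c - a) := by
  simp only [FirstReturn, hT, add_zero, sub_self, ne_eq, sub_eq_zero, Nat.add_sub_cancel' hac]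
  refine and_congr_right fun _ => ⟨fun h u hu huc => h _ (by omega) (by omega),
    fun h u hau huc => ?_⟩
  simpa [Nat.add_sub_cancel' hau.le] using h (u - a) (by omega) (by omega)

theorem noPriorVisit_iff_of_reflect {c : ℕ} (hT : ∀ t ≤ c, T t = S c - S (c - t)) :
    NoPriorVisit S c ↔ NoReturn T 0 c := by
  simp only [NoPriorVisit, NoReturn]
  refine ⟨fun h u hu huc => ?_, fun h u huc => ?_⟩
  · rw [hT u huc, hT 0 (Nat.zero_le c), Nat.sub_zero, sub_self, ne_eq, sub_eq_zero]
    exact (h _ (by omega)).symm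
  · have := h (c - u) (by omega) (by omega)
    rwa [hT _ (by omega), hT 0 (Nat.zero_le c), Nat.sub_sub_self huc.le, Nat.sub_zero, sub_self,
      ne_eq, sub_eq_zero, eq_comm] at this

end PathShift

section Measurability

variable {Ω α : Type*} {m : MeasurableSpace Ω} [MeasurableSpace α] [MeasurableEq α]
  {S : ℕ → Ω → α}

theorem measurableSet_noReturn {a b : ℕ} (hS : ∀ t ≤ b, Measurable (S t)) :
    MeasurableSet {ω | NoReturn (S · ω) a b} := by
  simp only [NoReturn, Set.ofPred_forall]
  exact .iInter fun u => .iInter fun hau => .iInter fun hub =>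
    (measurableSet_eq_fun (hS u hub) (hS a (by omega))).compl

theorem measurableSet_firstReturn {a c : ℕ} (hac : a ≤ c) (hS : ∀ t ≤ c, Measurable (S t)) :
    MeasurableSet {ω | FirstReturn (S · ω) a c} := by
  simp only [FirstReturn, Set.ofPred_and, Set.ofPred_forall]
  exact (measurableSet_eq_fun (hS c le_rfl) (hS a hac)).inter <| .iInter fun u => .iInter
    fun hau => .iInter fun huc => (measurableSet_eq_fun (hS u huc.le) (hS a hac)).compl

theorem measurableSet_noPriorVisit {c : ℕ} (hS : ∀ t ≤ c, Measurable (S t)) :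
    MeasurableSet {ω | NoPriorVisit (S · ω) c} := by
  simp only [NoPriorVisit, Set.ofPred_forall]
  exact .iInter fun u => .iInter fun huc =>
    (measurableSet_eq_fun (hS u huc.le) (hS c le_rfl)).compl

end Measurability

abbrev generatedSigma {Ω β : Type*} [MeasurableSpace β] (X : ℕ → Ω → β) (s : Set ℕ) :
    MeasurableSpace Ω :=
  ⨆ i ∈ s, MeasurableSpace.comap (X i) inferInstance

theorem measurable_of_mem_generatedSigma {Ω β : Type*} [MeasurableSpace β]
    {X : ℕ → Ω → β} {s : Set ℕ} {i : ℕ} (hi : i ∈ s) :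
    Measurable[generatedSigma X s] (X i) :=
  Measurable.of_comap_le (le_iSup₂ (f := fun i _ => MeasurableSpace.comap (X i) _) i hi)

def reflectBelow (c i : ℕ) : ℕ := if i < c then c - 1 - i else i

theorem reflectBelow_injective (c : ℕ) : (reflectBelow c).Injective := by
  intro i i' h
  simp only [reflectBelow] at h
  split_ifs at h <;> omega

section IID

variable {Ω β : Type*} [MeasurableSpace Ω] {μ : Measure Ω} [MeasurableSpace β]
  {X : ℕ → Ω → β}

theorem ProbabilityTheory.iIndepFun.measure_inter_eq_mul_of_Iio_Ici
    (hmeas : ∀ i, Measurable (X i)) (hindep : iIndepFun X μ) (a : ℕ) {A B : Set Ω}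
    (hA : MeasurableSet[generatedSigma X (Set.Iio a)] A)
    (hB : MeasurableSet[generatedSigma X (Set.Ici a)] B) :
    μ (A ∩ B) = μ A * μ B :=
  (Indep_iff _ _ μ).1 (indep_iSup_of_disjoint (fun i => (hmeas i).comap_le) hindep.iIndep
    (Set.Iio_disjoint_Ici le_rfl)) A B hA hB

theorem ProbabilityTheory.iIndepFun.measure_reindex_preimage (hmeas : ∀ i, Measurable (X i))
    (hindep : iIndepFun X μ) (hident : ∀ i, μ.map (X i) = μ.map (X 0)) {g : ℕ → ℕ}
    (hg : g.Injective) {E : Set (ℕ → β)} (hE : MeasurableSet E) :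
    μ ((fun ω i => X (g i) ω) ⁻¹' E) = μ ((fun ω i => X i ω) ⁻¹' E) := by
  have hlaw : μ.map (fun ω i => X (g i) ω) = μ.map (fun ω i => X i ω) := by
    rw [(hindep.precomp hg).map_fun_eq_infinitePi_map (fun i => hmeas (g i)),
      hindep.map_fun_eq_infinitePi_map hmeas]
    simp only [hident]
  rw [← Measure.map_apply (measurable_pi_lambda _ fun i => hmeas (g i)) hE, hlaw,
    Measure.map_apply (measurable_pi_lambda _ hmeas) hE]

end IID

section Walk

variable {Ω : Type*} {d : ℕ} {X : ℕ → Ω → (Fin d → ℤ)}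

theorem measurable_walk {m : MeasurableSpace Ω} {t : ℕ} (hX : ∀ i < t, Measurable (X i)) :
    Measurable (walk d X t) :=
  Finset.measurable_sum _ fun i hi => hX i (mem_range.1 hi)

theorem walk_zero (ω : Ω) : walk d X 0 ω = 0 := sum_range_zero _

theorem walk_succ (t : ℕ) (ω : Ω) : walk d X (t + 1) ω = walk d X t ω + X t ω :=
  sum_range_succ _ _

theorem walk_shift (a t : ℕ) (ω : Ω) :
    walk d (fun i => X (a + i)) t ω = walk d X (a + t) ω - walk d X a ω := by
  simp only [walk, sum_range_add, add_sub_cancel_left]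

theorem walk_reflectBelow {c t : ℕ} (ht : t ≤ c) (ω : Ω) :
    walk d (fun i => X (reflectBelow c i)) t ω = walk d X c ω - walk d X (c - t) ω := by
  induction t with
  | zero => simp [walk_zero]
  | succ t ih =>
    have hc : c - t = c - (t + 1) + 1 := by omega
    rw [walk_succ, ih (by omega), hc, walk_succ, reflectBelow, if_pos (by omega),
      show c - 1 - t = c - (t + 1) by omega]
    abel

theorem setOf_noReturn_walk_eq (a b : ℕ) :
    {ω | NoReturn (walk d X · ω) a b} =
      {ω | NoReturn (walk d (fun i => X (a + i)) · ω) 0 (b - a)} :=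
  Set.ext fun ω => noReturn_iff_of_shift (fun t => walk_shift a t ω) b

theorem setOf_firstReturn_walk_eq {a c : ℕ} (hac : a ≤ c) :
    {ω | FirstReturn (walk d X · ω) a c} =
      {ω | FirstReturn (walk d (fun i => X (a + i)) · ω) 0 (c - a)} :=
  Set.ext fun ω => firstReturn_iff_of_shift (S := (walk d X · ω)) hac fun t => walk_shift a t ω

theorem setOf_noPriorVisit_walk_eq (c : ℕ) :
    {ω | NoPriorVisit (walk d X · ω) c} =
      {ω | NoReturn (walk d (fun i => X (reflectBelow c i)) · ω) 0 c} :=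
  Set.ext fun ω => noPriorVisit_iff_of_reflect fun _ ht => walk_reflectBelow ht ω

theorem measurable_walk_shift (a t : ℕ) :
    Measurable[generatedSigma X (Set.Ici a)] (walk d (fun i => X (a + i)) t) :=
  measurable_walk fun i _ =>
    measurable_of_mem_generatedSigma (Set.mem_Ici.2 (Nat.le_add_right a i))

theorem measurableSet_noReturn_walk_future (a b : ℕ) :
    MeasurableSet[generatedSigma X (Set.Ici a)] {ω | NoReturn (walk d X · ω) a b} := by
  rw [setOf_noReturn_walk_eq]
  exact measurableSet_noReturn fun t _ => measurable_walk_shift a t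

theorem measurableSet_firstReturn_walk_future {a c : ℕ} (hac : a ≤ c) :
    MeasurableSet[generatedSigma X (Set.Ici a)] {ω | FirstReturn (walk d X · ω) a c} := by
  rw [setOf_firstReturn_walk_eq hac]
  exact measurableSet_firstReturn (Nat.zero_le _) fun t _ => measurable_walk_shift a t

variable [MeasurableSpace Ω] {μ : Measure Ω}

section Law

variable (hmeas : ∀ i, Measurable (X i)) (hindep : iIndepFun X μ)
  (hident : ∀ i, μ.map (X i) = μ.map (X 0))
include hmeas hindep hident

theorem measure_noReturn_walk_reindex {g : ℕ → ℕ} (hg : g.Injective) (b : ℕ) :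
    μ {ω | NoReturn (walk d (fun i => X (g i)) · ω) 0 b} =
      μ {ω | NoReturn (walk d X · ω) 0 b} :=
  hindep.measure_reindex_preimage hmeas hident hg
    (E := {x | NoReturn (fun t => ∑ i ∈ range t, x i) 0 b})
    (measurableSet_noReturn fun _ _ => Finset.measurable_sum _ fun i _ => measurable_pi_apply i)

theorem measure_firstReturn_walk_reindex {g : ℕ → ℕ} (hg : g.Injective) (c : ℕ) :
    μ {ω | FirstReturn (walk d (fun i => X (g i)) · ω) 0 c} =
      μ {ω | FirstReturn (walk d X · ω) 0 c} :=
  hindep.measure_reindex_preimage hmeas hident hg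
    (E := {x | FirstReturn (fun t => ∑ i ∈ range t, x i) 0 c})
    (measurableSet_firstReturn (Nat.zero_le c) fun _ _ =>
      Finset.measurable_sum _ fun i _ => measurable_pi_apply i)

theorem measure_noReturn_walk (a b : ℕ) :
    μ {ω | NoReturn (walk d X · ω) a b} = μ {ω | NoReturn (walk d X · ω) 0 (b - a)} := by
  rw [setOf_noReturn_walk_eq,
    measure_noReturn_walk_reindex hmeas hindep hident (add_right_injective a)]

theorem measure_firstReturn_walk {a c : ℕ} (hac : a ≤ c) :
    μ {ω | FirstReturn (walk d X · ω) a c} =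
      μ {ω | FirstReturn (walk d X · ω) 0 (c - a)} := by
  rw [setOf_firstReturn_walk_eq hac,
    measure_firstReturn_walk_reindex hmeas hindep hident (add_right_injective a)]

theorem measure_noPriorVisit_walk (c : ℕ) :
    μ {ω | NoPriorVisit (walk d X · ω) c} = μ {ω | NoReturn (walk d X · ω) 0 c} := by
  rw [setOf_noPriorVisit_walk_eq,
    measure_noReturn_walk_reindex hmeas hindep hident (reflectBelow_injective c)]

end Law

end Walk

def successiveVisits (d : ℕ) {Ω : Type*} (X : ℕ → Ω → (Fin d → ℤ)) {jj : ℕ}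
    (k : Fin (jj + 1) → ℕ) : Set Ω :=
  {ω | NoPriorVisit (walk d X · ω) (k 0) ∧
    ∀ l : Fin jj, FirstReturn (walk d X · ω) (k l.castSucc) (k l.succ)}

def visitEvent (d : ℕ) {Ω : Type*} (X : ℕ → Ω → (Fin d → ℤ)) (n : ℕ) {jj : ℕ}
    (k : Fin (jj + 1) → Fin (n + 1)) : Set Ω :=
  {ω | ∀ m : Fin (n + 1), walk d X m ω = walk d X (k 0) ω ↔ ∃ l, k l = m}

section Visits

variable {Ω : Type*} {d : ℕ} {X : ℕ → Ω → (Fin d → ℤ)} {jj : ℕ}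

theorem measurableSet_successiveVisits_past {k : Fin (jj + 1) → ℕ} (hk : Monotone k) :
    MeasurableSet[generatedSigma X (Set.Iio (k (Fin.last jj)))] (successiveVisits d X k) := by
  have hwalk : ∀ t ≤ k (Fin.last jj), Measurable[generatedSigma X (Set.Iio (k (Fin.last jj)))]
      (walk d X t) := fun t ht =>
    measurable_walk fun i hi =>
      measurable_of_mem_generatedSigma (by simp only [Set.mem_Iio]; omega)
  simp only [successiveVisits, Set.ofPred_and, Set.ofPred_forall]
  exact (measurableSet_noPriorVisit fun t ht => hwalk t (ht.trans (hk (Fin.zero_le _)))).inter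
    (.iInter fun l => measurableSet_firstReturn (hk (Fin.castSucc_le_succ l))
      fun t ht => hwalk t (ht.trans (hk (Fin.le_last _))))

theorem visitEvent_eq {n : ℕ} {k : Fin (jj + 1) → Fin (n + 1)} (hk : StrictMono k) :
    visitEvent d X n k = successiveVisits d X (fun l => (k l : ℕ)) ∩
      {ω | NoReturn (walk d X · ω) (k (Fin.last jj)) n} := by
  ext ω
  rw [Set.mem_inter_iff, successiveVisits, Set.mem_ofPred_eq, Set.mem_ofPred_eq, and_assoc,
    ← visits_eq_range_iff (k := fun l => (k l : ℕ)) (Fin.val_strictMono.comp hk)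
      (Nat.lt_succ_iff.1 (k _).isLt)]
  simp only [visitEvent, Set.mem_ofPred_eq, Set.mem_range, Fin.ext_iff]
  exact ⟨fun h m hm => h ⟨m, Nat.lt_succ_of_le hm⟩,
    fun h m => h m (Nat.lt_succ_iff.1 m.isLt)⟩

theorem measurableSet_visitEvent [MeasurableSpace Ω] (hmeas : ∀ i, Measurable (X i)) (n : ℕ)
    (k : Fin (jj + 1) → Fin (n + 1)) : MeasurableSet (visitEvent d X n k) := by
  simp only [visitEvent, Set.ofPred_forall]
  exact .iInter fun m => measurableSet_setOfPred.2 <|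
    ((measurable_walk fun i _ => hmeas i).eq (measurable_walk fun i _ => hmeas i)).iff
      measurable_const

variable [MeasurableSpace Ω] {μ : Measure Ω} (hmeas : ∀ i, Measurable (X i))
  (hindep : iIndepFun X μ) (hident : ∀ i, μ.map (X i) = μ.map (X 0))
include hmeas hindep hident

theorem measure_successiveVisits {k : Fin (jj + 1) → ℕ} (hk : StrictMono k) :
    μ (successiveVisits d X k) = μ {ω | NoReturn (walk d X · ω) 0 (k 0)} *
      ∏ l : Fin jj, μ {ω | FirstReturn (walk d X · ω) 0 (k l.succ - k l.castSucc)} := by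
  induction jj with
  | zero =>
    simp [successiveVisits, measure_noPriorVisit_walk hmeas hindep hident]
  | succ jj ih =>
    have hsplit : successiveVisits d X k = successiveVisits d X (Fin.init k) ∩
        {ω | FirstReturn (walk d X · ω) (k (Fin.last jj).castSucc) (k (Fin.last (jj + 1)))} := by
      ext ω
      simp only [successiveVisits, Set.mem_inter_iff, Set.mem_ofPred_eq, Fin.forall_fin_succ',
        Fin.init, Fin.castSucc_zero, Fin.succ_last, Fin.succ_castSucc, and_assoc]
    have hinit : StrictMono (Fin.init k) := hk.comp Fin.strictMono_castSucc
    have hlast : k (Fin.last jj).castSucc ≤ k (Fin.last (jj + 1)) :=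
      hk.monotone (Fin.castSucc_le_succ _)
    rw [hsplit, hindep.measure_inter_eq_mul_of_Iio_Ici hmeas _ ?past ?future, ih hinit,
      Fin.prod_univ_castSucc, mul_assoc, measure_firstReturn_walk hmeas hindep hident hlast]
    case past => exact measurableSet_successiveVisits_past hinit.monotone
    case future => exact measurableSet_firstReturn_walk_future hlast
    rfl

theorem measure_visitEvent {n : ℕ} {k : Fin (jj + 1) → Fin (n + 1)} (hk : StrictMono k) :
    μ (visitEvent d X n k) = μ {ω | NoReturn (walk d X · ω) 0 (k 0)} *
      (∏ l : Fin jj, μ {ω | FirstReturn (walk d X · ω) 0 (k l.succ - k l.castSucc)}) *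
      μ {ω | NoReturn (walk d X · ω) 0 (n - k (Fin.last jj))} := by
  have hk' : StrictMono fun l => (k l : ℕ) := Fin.val_strictMono.comp hk
  rw [visitEvent_eq hk, hindep.measure_inter_eq_mul_of_Iio_Ici hmeas _
      (measurableSet_successiveVisits_past hk'.monotone) (measurableSet_noReturn_walk_future _ _),
    measure_successiveVisits hmeas hindep hident hk',
    measure_noReturn_walk hmeas hindep hident (k (Fin.last jj)) n]

end Visits

section LocalTime

variable {Ω : Type*} {d : ℕ} {X : ℕ → Ω → (Fin d → ℤ)}

theorem localTime_eq_card (n : ℕ) (x : Fin d → ℤ) (ω : Ω) :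
    localTime d X n x ω = #{m : Fin (n + 1) | walk d X m ω = x} := by
  rw [localTime, ← Fin.sum_univ_eq_sum_range (fun i => if walk d X i ω = x then 1 else 0),
    sum_boole, Nat.cast_id]

theorem Qfun_eq_sum_indicator (n jj : ℕ) (ω : Ω) :
    Qfun d X n (jj + 1) ω =
      ∑ k ∈ univ.filter (fun k : Fin (jj + 1) → Fin (n + 1) => ∀ a b, a < b → k a < k b),
        (visitEvent d X n k).indicator 1 ω := by
  classical
  let f : Fin (n + 1) → Fin d → ℤ := fun m => walk d X m ω
  have hsupp : ∀ x ∉ univ.image f,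
      (if localTime d X n x ω = jj + 1 then (1 : ℝ) else 0) = 0 := by
    intro x hx
    refine if_neg fun hcard => ?_
    rw [localTime_eq_card] at hcard
    obtain ⟨m, hm⟩ := card_pos.1 (by rw [hcard]; omega)
    exact hx (mem_image.2 ⟨m, mem_univ m, (mem_filter.1 hm).2⟩)
  rw [Qfun, tsum_eq_sum hsupp, sum_boole]
  simp only [Set.indicator_apply, Pi.one_apply, sum_boole, localTime_eq_card, visitEvent,
    Set.mem_ofPred_eq]
  exact_mod_cast (card_filter_card_fiber_eq f jj).trans (by congr)

theorem integral_Qfun [MeasurableSpace Ω] {μ : Measure Ω} [IsFiniteMeasure μ]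
    (hmeas : ∀ i, Measurable (X i)) (n jj : ℕ) :
    ∫ ω, Qfun d X n (jj + 1) ω ∂μ =
      ∑ k ∈ univ.filter (fun k : Fin (jj + 1) → Fin (n + 1) => ∀ a b, a < b → k a < k b),
        μ.real (visitEvent d X n k) := by
  simp_rw [Qfun_eq_sum_indicator]
  rw [integral_finsetSum _ fun k _ =>
    (integrable_const 1).indicator (measurableSet_visitEvent hmeas n k)]
  exact sum_congr rfl fun k _ => integral_indicator_one (measurableSet_visitEvent hmeas n k)

end LocalTime

theorem gamSeq_eq {Ω : Type*} [MeasurableSpace Ω] (μ : Measure Ω) (d : ℕ)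
    (X : ℕ → Ω → (Fin d → ℤ)) (m : ℕ) :
    gamSeq d μ X m = μ.real {ω | NoReturn (walk d X · ω) 0 m} := by
  simp [gamSeq, NoReturn, walk_zero, Nat.one_le_iff_ne_zero, Nat.pos_iff_ne_zero,
    measureReal_def]

theorem tauEqProb_eq {Ω : Type*} [MeasurableSpace Ω] (μ : Measure Ω) (d : ℕ)
    (X : ℕ → Ω → (Fin d → ℤ)) (m : ℕ) :
    tauEqProb d μ X m = μ.real {ω | FirstReturn (walk d X · ω) 0 m} := by
  simp [tauEqProb, FirstReturn, walk_zero, Nat.one_le_iff_ne_zero, Nat.pos_iff_ne_zero,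
    measureReal_def]

/-- Representation of `E[Q_n(j)]` as a sum over `0 ≤ k_1 < ... < k_j ≤ n` of
`γ_{k_1} (Π_{i=1}^{j-1} P(τ = k_{i+1} - k_i)) γ_{n-k_j}`. -/
theorem stmt14
    {Ω : Type*} [MeasurableSpace Ω] (μ : Measure Ω) [IsProbabilityMeasure μ]
    (d : ℕ)
    (X : ℕ → Ω → (Fin d → ℤ))
    (hmeas : ∀ i, Measurable (X i))
    (hindep : iIndepFun X μ)
    (hident : ∀ i, μ.map (X i) = μ.map (X 0))
    (n j : ℕ) (hj : 1 ≤ j) :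
    ∫ ω, Qfun d X n j ω ∂μ =
      ∑ k ∈ Finset.univ.filter
          (fun k : Fin j → Fin (n + 1) => ∀ a b : Fin j, a < b → k a < k b),
        gamSeq d μ X (k ⟨0, by omega⟩ : Fin (n + 1)).val *
          (∏ i : Fin (j - 1),
            tauEqProb d μ X
              ((k ⟨i.val + 1, by have := i.isLt; omega⟩).val -
                (k ⟨i.val, by have := i.isLt; omega⟩).val)) *
          gamSeq d μ X (n - (k ⟨j - 1, by omega⟩ : Fin (n + 1)).val) := by
  obtain ⟨jj, rfl⟩ : ∃ jj, j = jj + 1 := ⟨j - 1, by omega⟩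
  rw [integral_Qfun hmeas n jj]
  refine sum_congr rfl fun k hk => ?_
  rw [measureReal_def, measure_visitEvent hmeas hindep hident (mem_filter.1 hk).2,
    ENNReal.toReal_mul, ENNReal.toReal_mul, ENNReal.toReal_prod]
  simp only [gamSeq_eq, tauEqProb_eq, Nat.add_sub_cancel, measureReal_def]
  rfl
end
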